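/- arXiv:math/0609810 — 4 statements merged into one kernel-verified Lean document; each statement's English description precedes it below -/
import Mathlib

section
/- There exists a connected 3-regular finite graph G that is not vertex-transitive, yet all vertex residuals Res(G, {v}) for v ∈ V(G) are isomorphic (each isomorphic to K₁). -/
open SimpleGraph

/-- Distance from a set of vertices `S` to a vertex `v`: `min_{s ∈ S} d(s, v)`. -/
noncomputable def setDist {V : Type*} (G : SimpleGraph V) (S : Set V) (v : V) : ℕ :=
  sInf ((fun s => G.dist s v) '' S)

/-- The set of vertices at maximal distance from `S`. -/
def resSet {V : Type*} (G : SimpleGraph V) (S : Set V) : Set V :=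
  {v | ∀ w, setDist G S w ≤ setDist G S v}

/-- The distance-residual graph: subgraph induced on vertices at maximal distance from `S`. -/
def Res {V : Type*} (G : SimpleGraph V) (S : Set V) : SimpleGraph (resSet G S) :=
  SimpleGraph.induce (resSet G S) G

/-!
The witness is a cubic graph on 14 vertices in which every vertex `v` has exactly one vertex at
distance 4 from it and all other vertices within distance 3, so every vertex residual is a single
vertex. It is not vertex-transitive because automorphisms preserve triangles and vertex 0 lies
on the triangle `0 6 9`, whereas vertex 2 lies on no triangle.
-/

namespace SimpleGraph

variable {V : Type*} {G : SimpleGraph V}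

theorem Reachable.dist_le_iff {u v : V} {n : ℕ} (h : G.Reachable u v) :
    G.dist u v ≤ n ↔ ∃ p : G.Walk u v, p.length ≤ n := by
  refine ⟨fun hn => ?_, fun ⟨p, hp⟩ => (G.dist_le p).trans hp⟩
  obtain ⟨p, hp⟩ := h.exists_walk_length_eq_dist
  exact ⟨p, hp ▸ hn⟩

theorem Iso.apply_ne_of_triangle {W : Type*} {H : SimpleGraph W} (φ : G ≃g H) {u x y : V}
    (hx : G.Adj u x) (hy : G.Adj u y) (hxy : G.Adj x y) {v : W}
    (hv : ∀ x y, H.Adj v x → H.Adj v y → ¬ H.Adj x y) : φ u ≠ v := by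
  rintro rfl
  exact hv _ _ (φ.map_adj_iff.mpr hx) (φ.map_adj_iff.mpr hy) (φ.map_adj_iff.mpr hxy)

def Iso.ofUnique {W : Type*} [Unique V] [Unique W] (G : SimpleGraph V) (H : SimpleGraph W) :
    G ≃g H :=
  ⟨Equiv.ofUnique V W, fun {a b} => by simp [Subsingleton.elim a b]⟩

section closedBallFinset

variable (G) [DecidableEq V] [G.LocallyFinite]

/-- Unlike `SimpleGraph.ball`, this is computable, so distances in a concrete finite graph can be
checked by `decide`. -/
def closedBallFinset : V → ℕ → Finset V
  | c, 0 => {c}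
  | c, n + 1 => insert c ((G.neighborFinset c).biUnion fun w => closedBallFinset w n)

variable {G}

theorem mem_closedBallFinset_iff {c v : V} {n : ℕ} :
    v ∈ G.closedBallFinset c n ↔ ∃ p : G.Walk c v, p.length ≤ n := by
  induction n generalizing c with
  | zero =>
    simp only [closedBallFinset, Finset.mem_singleton, nonpos_iff_eq_zero]
    constructor
    · rintro rfl
      exact ⟨.nil, rfl⟩
    · rintro ⟨p, hp⟩
      exact (Walk.eq_of_length_eq_zero hp).symm
  | succ n ih =>
    simp only [closedBallFinset, Finset.mem_insert, Finset.mem_biUnion, mem_neighborFinset, ih]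
    constructor
    · rintro (rfl | ⟨w, hw, p, hp⟩)
      · exact ⟨.nil, Nat.zero_le _⟩
      · exact ⟨.cons hw p, by simpa using hp⟩
    · rintro ⟨_ | ⟨hw, p⟩, hp⟩
      · exact .inl rfl
      · exact .inr ⟨_, hw, p, by simpa using hp⟩

theorem Connected.dist_le_iff_mem_closedBallFinset (hG : G.Connected) {u v : V} {n : ℕ} :
    G.dist u v ≤ n ↔ v ∈ G.closedBallFinset u n :=
  (hG u v).dist_le_iff.trans mem_closedBallFinset_iff.symm

end closedBallFinset

end SimpleGraph

theorem setDist_singleton {V : Type*} (G : SimpleGraph V) (v w : V) :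
    setDist G {v} w = G.dist v w := by
  rw [setDist, Set.image_singleton, csInf_singleton]

theorem resSet_singleton_eq_of_forall_dist_lt {V : Type*} {G : SimpleGraph V} {v a : V}
    (h : ∀ x ≠ a, G.dist v x < G.dist v a) : resSet G {v} = {a} := by
  ext w
  simp only [resSet, setDist_singleton, Set.mem_ofPred_eq, Set.mem_singleton_iff]
  constructor
  · intro hw
    by_contra hne
    exact (hw a).not_gt (h w hne)
  · rintro rfl x
    rcases eq_or_ne x w with rfl | hx
    · exact le_rfl
    · exact (h x hx).le

theorem nonempty_res_iso_of_resSet_eq_singleton {V : Type*} {G : SimpleGraph V} {S : Set V}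
    {a : V} (h : resSet G S = {a}) : Nonempty (Res G S ≃g (⊤ : SimpleGraph (Fin 1))) :=
  have : Unique (resSet G S) := (Equiv.setCongr h).unique
  ⟨.ofUnique _ _⟩

def cubic14Nbrs : Fin 14 → Finset (Fin 14) :=
  ![{5, 6, 9}, {2, 3, 4}, {1, 11, 13}, {1, 4, 7}, {1, 3, 5}, {0, 4, 11}, {0, 8, 9},
    {3, 9, 12}, {6, 10, 11}, {0, 6, 7}, {8, 12, 13}, {2, 5, 8}, {7, 10, 13}, {2, 10, 12}]

def cubic14 : SimpleGraph (Fin 14) where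
  Adj u v := v ∈ cubic14Nbrs u
  symm := ⟨fun u v =>
    (by decide : ∀ u v : Fin 14, v ∈ cubic14Nbrs u → u ∈ cubic14Nbrs v) u v⟩
  loopless := ⟨fun v => (by decide : ∀ v : Fin 14, v ∉ cubic14Nbrs v) v⟩

instance : DecidableRel cubic14.Adj := fun u v => inferInstanceAs (Decidable (v ∈ cubic14Nbrs u))

theorem cubic14_ncard_neighborSet (v : Fin 14) : (cubic14.neighborSet v).ncard = 3 := by
  change (cubic14Nbrs v : Set (Fin 14)).ncard = 3
  rw [Set.ncard_coe_finset]
  revert v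
  decide

theorem cubic14_connected : cubic14.Connected := by
  have h : ∀ v, v ∈ cubic14.closedBallFinset 0 4 := by decide
  exact cubic14.connected_iff_exists_forall_reachable.mpr
    ⟨0, fun v => (mem_closedBallFinset_iff.mp (h v)).elim fun p _ => ⟨p⟩⟩

theorem cubic14_exists_unique_farthest (v : Fin 14) :
    ∃ a, ∀ x ≠ a, cubic14.dist v x < cubic14.dist v a := by
  have h : ∀ v, (cubic14.closedBallFinset v 3)ᶜ.card = 1 := by decide
  obtain ⟨a, ha⟩ := Finset.card_eq_one.mp (h v)
  refine ⟨a, fun x hx => ?_⟩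
  have hx3 : cubic14.dist v x ≤ 3 := by
    rw [cubic14_connected.dist_le_iff_mem_closedBallFinset, ← Finset.notMem_compl, ha]
    simpa using hx
  have ha3 : ¬ cubic14.dist v a ≤ 3 := by
    rw [cubic14_connected.dist_le_iff_mem_closedBallFinset, ← Finset.mem_compl, ha]
    exact Finset.mem_singleton_self a
  omega

theorem cubic14_not_vertexTransitive :
    ¬ ∀ u v : Fin 14, ∃ φ : cubic14 ≃g cubic14, φ u = v := by
  intro h
  obtain ⟨φ, hφ⟩ := h 0 2
  refine φ.apply_ne_of_triangle (x := 6) (y := 9) (by decide) (by decide) (by decide) ?_ hφ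
  decide

theorem statement_2 :
    ∃ (m : ℕ) (G : SimpleGraph (Fin m)),
      G.Connected ∧ (∀ v, (G.neighborSet v).ncard = 3) ∧
      ¬ (∀ u v : Fin m, ∃ φ : G ≃g G, φ u = v) ∧
      ∀ v : Fin m, Nonempty (Res G {v} ≃g (⊤ : SimpleGraph (Fin 1))) := by
  refine ⟨14, cubic14, cubic14_connected, cubic14_ncard_neighborSet,
    cubic14_not_vertexTransitive, fun v => ?_⟩
  obtain ⟨a, ha⟩ := cubic14_exists_unique_farthest v
  exact nonempty_res_iso_of_resSet_eq_singleton (resSet_singleton_eq_of_forall_dist_lt ha)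
end

section
/- Let G and H be connected finite graphs with roots R_G ⊆ V(G) and R_H ⊆ V(H). Then Res(G □ H, R_G × R_H) is isomorphic to Res(G, R_G) □ Res(H, R_H), where □ denotes the Cartesian product of graphs. -/
open SimpleGraph

/-!
Distances in `G □ H` add up coordinatewise, hence so do the distances from the root set
`RG ×ˢ RH`: `setDist (a, b) = setDist a + setDist b`. A sum of two functions of independent
variables is maximal exactly where both summands are, so the vertices at maximal distance form
the product `resSet G RG ×ˢ resSet H RH`, and the graph induced by `G □ H` on a product of vertex
sets is the box product of the induced graphs.
-/

namespace SimpleGraph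

variable {α β : Type*} {G : SimpleGraph α} {H : SimpleGraph β}

lemma dist_boxProd {x y : α × β} (hG : G.Reachable x.1 y.1) (hH : H.Reachable x.2 y.2) :
    (G □ H).dist x y = G.dist x.1 y.1 + H.dist x.2 y.2 := by
  have hGH : (G □ H).Reachable x y := reachable_boxProd.mpr ⟨hG, hH⟩
  apply Nat.cast_injective (R := ℕ∞)
  rw [Nat.cast_add, hGH.coe_dist_eq_edist, hG.coe_dist_eq_edist, hH.coe_dist_eq_edist,
    edist_boxProd]

def induceProdIsoBoxProd (s : Set α) (t : Set β) :
    (G □ H).induce (s ×ˢ t) ≃g G.induce s □ H.induce t where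
  toEquiv := Equiv.Set.prod s t
  map_rel_iff' := by
    rintro ⟨⟨a, b⟩, hab⟩ ⟨⟨c, d⟩, hcd⟩
    simp only [boxProd_adj, comap_adj, Function.Embedding.coe_subtype, Subtype.ext_iff]
    exact Iff.rfl

end SimpleGraph

section setDist

variable {V : Type*} {G : SimpleGraph V} {S : Set V}

lemma setDist_le_dist {s : V} (hs : s ∈ S) (v : V) : setDist G S v ≤ G.dist s v :=
  Nat.sInf_le ⟨s, hs, rfl⟩

lemma exists_dist_eq_setDist (hS : S.Nonempty) (v : V) : ∃ s ∈ S, G.dist s v = setDist G S v :=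
  Nat.sInf_mem (hS.image _)

lemma le_setDist_iff (hS : S.Nonempty) {v : V} {n : ℕ} :
    n ≤ setDist G S v ↔ ∀ s ∈ S, n ≤ G.dist s v := by
  refine ⟨fun h s hs => h.trans (setDist_le_dist hs v), fun h => ?_⟩
  obtain ⟨s, hs, hsv⟩ := exists_dist_eq_setDist (G := G) hS v
  exact hsv ▸ h s hs

end setDist

lemma Set.setOf_forall_le_add_prod {α β M : Type*} [AddCommMonoid M] [PartialOrder M]
    [IsOrderedCancelAddMonoid M] (f : α → M) (g : β → M) :
    {p : α × β | ∀ q : α × β, f q.1 + g q.2 ≤ f p.1 + g p.2} =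
      {a | ∀ a', f a' ≤ f a} ×ˢ {b | ∀ b', g b' ≤ g b} := by
  ext ⟨a, b⟩
  refine ⟨fun h => ⟨fun a' => ?_, fun b' => ?_⟩, fun ⟨ha, hb⟩ q => add_le_add (ha q.1) (hb q.2)⟩
  · exact le_of_add_le_add_right (h (a', b))
  · exact le_of_add_le_add_left (h (a, b'))

section boxProd

variable {α β : Type*} {G : SimpleGraph α} {H : SimpleGraph β}

lemma setDist_boxProd (hG : G.Preconnected) (hH : H.Preconnected) {RG : Set α} {RH : Set β}
    (hRG : RG.Nonempty) (hRH : RH.Nonempty) (x : α × β) :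
    setDist (G □ H) (RG ×ˢ RH) x = setDist G RG x.1 + setDist H RH x.2 := by
  obtain ⟨s, hs, hsx⟩ := exists_dist_eq_setDist (G := G) hRG x.1
  obtain ⟨t, ht, htx⟩ := exists_dist_eq_setDist (G := H) hRH x.2
  refine le_antisymm ?_ ((le_setDist_iff (hRG.prod hRH)).mpr ?_)
  · calc setDist (G □ H) (RG ×ˢ RH) x ≤ (G □ H).dist (s, t) x :=
          setDist_le_dist (Set.mk_mem_prod hs ht) x
      _ = setDist G RG x.1 + setDist H RH x.2 := by
        rw [dist_boxProd (hG _ _) (hH _ _), hsx, htx]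
  · rintro ⟨u, v⟩ ⟨hu, hv⟩
    rw [dist_boxProd (hG _ _) (hH _ _)]
    exact add_le_add (setDist_le_dist hu x.1) (setDist_le_dist hv x.2)

lemma resSet_boxProd (hG : G.Preconnected) (hH : H.Preconnected) {RG : Set α} {RH : Set β}
    (hRG : RG.Nonempty) (hRH : RH.Nonempty) :
    resSet (G □ H) (RG ×ˢ RH) = resSet G RG ×ˢ resSet H RH := by
  simp only [resSet, setDist_boxProd hG hH hRG hRH]
  exact Set.setOf_forall_le_add_prod _ _

end boxProd

theorem statement_12_general {α β : Type*}
    (G : SimpleGraph α) (H : SimpleGraph β) (hG : G.Connected) (hH : H.Connected)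
    (RG : Set α) (RH : Set β) (hRG : RG.Nonempty) (hRH : RH.Nonempty) :
    Nonempty (Res (G □ H) (RG ×ˢ RH) ≃g (Res G RG □ Res H RH)) := by
  unfold Res
  rw [resSet_boxProd hG.preconnected hH.preconnected hRG hRH]
  exact ⟨induceProdIsoBoxProd _ _⟩

theorem statement_12 {α β : Type*} [Fintype α] [Fintype β]
    (G : SimpleGraph α) (H : SimpleGraph β) (hG : G.Connected) (hH : H.Connected)
    (RG : Set α) (RH : Set β) (hRG : RG.Nonempty) (hRH : RH.Nonempty) :
    Nonempty (Res (G □ H) (RG ×ˢ RH) ≃g (Res G RG □ Res H RH)) :=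
  statement_12_general G H hG hH RG RH hRG hRH
end

section
/- Let G and H be connected finite graphs with roots R_G, R_H, and let d_{R_G} and d_{R_H} denote the maximal distances from the roots to vertices of G and H respectively. Then in the strong product: if d_{R_G} > d_{R_H} then Res(G ⊠ H, R_G × R_H) ≅ Res(G, R_G) ⊠ H; if d_{R_G} < d_{R_H} then Res(G ⊠ H, R_G × R_H) ≅ G ⊠ Res(H, R_H); and if d_{R_G} = d_{R_H} then Res(G ⊠ H, R_G × R_H) is the subgraph induced on (V(Res(G,R_G)) × V(H)) ∪ (V(G) × V(Res(H,R_H))). -/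
/-!
Distances in `G ⊠ H` are maxima of distances in the factors: two shortest walks can be run
simultaneously, and a walk in `G ⊠ H` projects to walks in `G` and `H` that are no longer. Hence
`d(R_G × R_H, (g, h)) = max (d(R_G, g)) (d(R_H, h))`, whose maximum over all vertices is
`max d_{R_G} d_{R_H}`. So `(g, h)` is at maximal distance from `R_G × R_H` iff its coordinate in a
factor with the larger `d_R` (either factor, in case of a tie) is at maximal distance in that factor.
-/

open SimpleGraph

/-- The strong product of two simple graphs. -/
def strongProd {α β : Type*} (G : SimpleGraph α) (H : SimpleGraph β) :
    SimpleGraph (α × β) where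
  Adj x y := x ≠ y ∧ (x.1 = y.1 ∨ G.Adj x.1 y.1) ∧ (x.2 = y.2 ∨ H.Adj x.2 y.2)
  symm := ⟨by
    rintro x y ⟨hne, h1, h2⟩
    exact ⟨hne.symm, h1.imp Eq.symm (fun h => G.adj_symm h), h2.imp Eq.symm (fun h => H.adj_symm h)⟩⟩
  loopless := ⟨fun x h => h.1 rfl⟩

section

variable {α β V W : Type*} {G : SimpleGraph α} {H : SimpleGraph β}
  {G' : SimpleGraph V} {H' : SimpleGraph W}

lemma SimpleGraph.Walk.exists_walk_length_le_of_eq_or_adj {f : V → W}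
    (hf : ∀ ⦃u v⦄, G'.Adj u v → f u = f v ∨ H'.Adj (f u) (f v)) :
    ∀ {u v : V} (p : G'.Walk u v), ∃ q : H'.Walk (f u) (f v), q.length ≤ p.length
  | _, _, nil => ⟨nil, le_rfl⟩
  | _, _, cons h p => by
    obtain ⟨q, hq⟩ := exists_walk_length_le_of_eq_or_adj hf p
    rcases hf h with heq | hadj
    · exact ⟨q.copy heq.symm rfl, by simp; omega⟩
    · exact ⟨cons hadj q, by simpa⟩

lemma SimpleGraph.Reachable.dist_map_le_of_eq_or_adj {f : V → W}
    (hf : ∀ ⦃u v⦄, G'.Adj u v → f u = f v ∨ H'.Adj (f u) (f v)) {u v : V}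
    (huv : G'.Reachable u v) : H'.dist (f u) (f v) ≤ G'.dist u v := by
  obtain ⟨p, hp⟩ := huv.exists_walk_length_eq_dist
  obtain ⟨q, hq⟩ := Walk.exists_walk_length_le_of_eq_or_adj hf p
  exact (dist_le q).trans (hp ▸ hq)

lemma strongProd_adj_left {a c : α} (h : G.Adj a c) (b : β) :
    (strongProd G H).Adj (a, b) (c, b) :=
  ⟨fun he => h.ne (congrArg Prod.fst he), Or.inr h, Or.inl rfl⟩

lemma strongProd_adj_right (a : α) {b d : β} (h : H.Adj b d) :
    (strongProd G H).Adj (a, b) (a, d) :=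
  ⟨fun he => h.ne (congrArg Prod.snd he), Or.inl rfl, Or.inr h⟩

lemma strongProd_adj_diag {a c : α} {b d : β} (hG : G.Adj a c) (hH : H.Adj b d) :
    (strongProd G H).Adj (a, b) (c, d) :=
  ⟨fun he => hG.ne (congrArg Prod.fst he), Or.inr hG, Or.inr hH⟩

def SimpleGraph.Walk.zipStrongProd :
    ∀ {a c : α} {b d : β}, G.Walk a c → H.Walk b d → (strongProd G H).Walk (a, b) (c, d)
  | _, _, _, _, nil, nil => nil
  | _, _, _, _, nil, cons h q => cons (strongProd_adj_right _ h) (zipStrongProd nil q)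
  | _, _, _, _, cons h p, nil => cons (strongProd_adj_left h _) (zipStrongProd p nil)
  | _, _, _, _, cons hG p, cons hH q => cons (strongProd_adj_diag hG hH) (zipStrongProd p q)

lemma SimpleGraph.Walk.length_zipStrongProd :
    ∀ {a c : α} {b d : β} (p : G.Walk a c) (q : H.Walk b d),
      (zipStrongProd p q).length = max p.length q.length
  | _, _, _, _, nil, nil => by simp [zipStrongProd]
  | _, _, _, _, nil, cons _ q => by simp [zipStrongProd, length_zipStrongProd nil q]
  | _, _, _, _, cons _ p, nil => by simp [zipStrongProd, length_zipStrongProd p nil]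
  | _, _, _, _, cons _ p, cons _ q => by simp [zipStrongProd, length_zipStrongProd p q]

lemma dist_strongProd {a c : α} {b d : β} (hac : G.Reachable a c) (hbd : H.Reachable b d) :
    (strongProd G H).dist (a, b) (c, d) = max (G.dist a c) (H.dist b d) := by
  obtain ⟨p, hp⟩ := hac.exists_walk_length_eq_dist
  obtain ⟨q, hq⟩ := hbd.exists_walk_length_eq_dist
  have hreach : (strongProd G H).Reachable (a, b) (c, d) := ⟨p.zipStrongProd q⟩
  apply le_antisymm
  · calc (strongProd G H).dist (a, b) (c, d) ≤ (p.zipStrongProd q).length := dist_le _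
      _ = max (G.dist a c) (H.dist b d) := by rw [Walk.length_zipStrongProd, hp, hq]
  · refine max_le ?_ ?_
    · exact hreach.dist_map_le_of_eq_or_adj (f := Prod.fst)
        fun _ _ (h : (strongProd G H).Adj _ _) => h.2.1
    · exact hreach.dist_map_le_of_eq_or_adj (f := Prod.snd)
        fun _ _ (h : (strongProd G H).Adj _ _) => h.2.2

lemma setDist_strongProd (hG : G.Preconnected) (hH : H.Preconnected) {S : Set α} {T : Set β}
    (hS : S.Nonempty) (hT : T.Nonempty) (x : α × β) :
    setDist (strongProd G H) (S ×ˢ T) x = max (setDist G S x.1) (setDist H T x.2) := by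
  obtain ⟨a, b⟩ := x
  apply le_antisymm
  · obtain ⟨s, hs, hsa⟩ := Nat.sInf_mem (hS.image fun s => G.dist s a)
    obtain ⟨t, ht, htb⟩ := Nat.sInf_mem (hT.image fun t => H.dist t b)
    refine Nat.sInf_le ⟨(s, t), ⟨hs, ht⟩, ?_⟩
    dsimp only
    rw [dist_strongProd (hG _ _) (hH _ _)]
    exact congrArg₂ max hsa htb
  · refine le_csInf ((hS.prod hT).image _) ?_
    rintro _ ⟨⟨s, t⟩, ⟨hs, ht⟩, rfl⟩
    dsimp only
    rw [dist_strongProd (hG _ _) (hH _ _)]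
    exact max_le_max (Nat.sInf_le ⟨s, hs, rfl⟩) (Nat.sInf_le ⟨t, ht, rfl⟩)

lemma sSup_range_max_fst_snd {γ : Type*} [ConditionallyCompleteLinearOrder γ]
    [Finite α] [Finite β] [Nonempty α] [Nonempty β] (f : α → γ) (g : β → γ) :
    sSup (Set.range fun x : α × β => max (f x.1) (g x.2)) =
      max (sSup (Set.range f)) (sSup (Set.range g)) := by
  have := ciSup_sup_eq (f := f ∘ Prod.fst) (g := g ∘ (Prod.snd : α × β → β))
    (Set.finite_range _).bddAbove (Set.finite_range _).bddAbove
  rwa [iSup, iSup, iSup, Prod.fst_surjective.range_comp f, Prod.snd_surjective.range_comp g] at this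

lemma setDist_le_sSup [Finite V] (S : Set V) (v : V) :
    setDist G' S v ≤ sSup (Set.range (setDist G' S)) :=
  le_csSup (Set.finite_range _).bddAbove ⟨v, rfl⟩

lemma mem_resSet_iff [Finite V] {S : Set V} {v : V} :
    v ∈ resSet G' S ↔ setDist G' S v = sSup (Set.range (setDist G' S)) := by
  refine ⟨fun h => le_antisymm (setDist_le_sSup S v) ?_, fun h w => h ▸ setDist_le_sSup S w⟩
  exact csSup_le ⟨_, v, rfl⟩ (Set.forall_mem_range.2 h)

lemma mem_resSet_strongProd_iff [Finite α] [Finite β] (hG : G.Connected) (hH : H.Connected)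
    {S : Set α} {T : Set β} (hS : S.Nonempty) (hT : T.Nonempty) {x : α × β} :
    x ∈ resSet (strongProd G H) (S ×ˢ T) ↔ max (setDist G S x.1) (setDist H T x.2) =
      max (sSup (Set.range (setDist G S))) (sSup (Set.range (setDist H T))) := by
  have : Nonempty α := hG.nonempty
  have : Nonempty β := hH.nonempty
  have hdist : setDist (strongProd G H) (S ×ˢ T) =
      fun x => max (setDist G S x.1) (setDist H T x.2) :=
    funext (setDist_strongProd hG.preconnected hH.preconnected hS hT)
  rw [mem_resSet_iff, hdist, sSup_range_max_fst_snd]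

def induceStrongProdIsoOfFst {s : Set (α × β)} {A : Set α} (hs : ∀ x, x ∈ s ↔ x.1 ∈ A) :
    (strongProd G H).induce s ≃g strongProd (G.induce A) H where
  toFun x := (⟨x.1.1, (hs x).1 x.2⟩, x.1.2)
  invFun y := ⟨(y.1, y.2), (hs _).2 y.1.2⟩
  left_inv _ := rfl
  right_inv _ := rfl
  map_rel_iff' {x y} := by
    simp only [Equiv.coe_fn_mk, comap_adj, Function.Embedding.subtype_apply, strongProd,
      ne_eq, Prod.ext_iff, Subtype.ext_iff]

def induceStrongProdIsoOfSnd {s : Set (α × β)} {B : Set β} (hs : ∀ x, x ∈ s ↔ x.2 ∈ B) :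
    (strongProd G H).induce s ≃g strongProd G (H.induce B) where
  toFun x := (x.1.1, ⟨x.1.2, (hs x).1 x.2⟩)
  invFun y := ⟨(y.1, y.2), (hs _).2 y.2.2⟩
  left_inv _ := rfl
  right_inv _ := rfl
  map_rel_iff' {x y} := by
    simp only [Equiv.coe_fn_mk, comap_adj, Function.Embedding.subtype_apply, strongProd,
      ne_eq, Prod.ext_iff, Subtype.ext_iff]

end

theorem statement_15 {α β : Type*} [Fintype α] [Fintype β]
    (G : SimpleGraph α) (H : SimpleGraph β) (hG : G.Connected) (hH : H.Connected)
    (RG : Set α) (RH : Set β) (hRG : RG.Nonempty) (hRH : RH.Nonempty) :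
    (sSup (Set.range (setDist G RG)) > sSup (Set.range (setDist H RH)) →
      Nonempty (Res (strongProd G H) (RG ×ˢ RH) ≃g strongProd (Res G RG) H)) ∧
    (sSup (Set.range (setDist G RG)) < sSup (Set.range (setDist H RH)) →
      Nonempty (Res (strongProd G H) (RG ×ˢ RH) ≃g strongProd G (Res H RH))) ∧
    (sSup (Set.range (setDist G RG)) = sSup (Set.range (setDist H RH)) →
      resSet (strongProd G H) (RG ×ˢ RH) =
        (resSet G RG) ×ˢ (Set.univ : Set β) ∪ (Set.univ : Set α) ×ˢ (resSet H RH)) := by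
  have hmem (x : α × β) := mem_resSet_strongProd_iff hG hH hRG hRH (x := x)
  have hG_le (a : α) := setDist_le_sSup (G' := G) RG a
  have hH_le (b : β) := setDist_le_sSup (G' := H) RH b
  refine ⟨fun _ => ⟨induceStrongProdIsoOfFst fun x => ?_⟩,
    fun _ => ⟨induceStrongProdIsoOfSnd fun x => ?_⟩, fun _ => Set.ext fun x => ?_⟩
  all_goals
    rw [hmem]
    simp only [mem_resSet_iff, Set.mem_union, Set.mem_prod, Set.mem_univ, and_true, true_and]
    have := hG_le x.1
    have := hH_le x.2
    omega
end

section
/- Let G₁, …, G_n be graphs and let x = (x₁,…,x_n), y = (y₁,…,y_n) be vertices of the direct product G = G₁ × ⋯ × G_n. If no integer m exists such that every G_i contains an x_i–y_i walk of length m, then x and y lie in different connected components of G; otherwise d_G(x,y) = min { m ∈ ℕ : every G_i has an x_i–y_i walk of length m }. -/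
open SimpleGraph

/-- The direct (tensor) product of a family of simple graphs:
tuples are adjacent iff they are adjacent coordinatewise in every factor. -/
def directProd {ι : Type*} {V : ι → Type*} (G : ∀ i, SimpleGraph (V i)) :
    SimpleGraph (∀ i, V i) where
  Adj x y := (∀ i, (G i).Adj (x i) (y i)) ∧ x ≠ y
  symm := ⟨by rintro x y ⟨h, hne⟩; exact ⟨fun i => (h i).symm, hne.symm⟩⟩
  loopless := ⟨fun x h => h.2 rfl⟩

/-!
A walk in the direct product projects to a walk of the same length in every factor. Conversely,
walks of a common length `m` in the factors can be run in lockstep; each step of the resulting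
tuple walk moves every coordinate, so (with at least one factor) it is a genuine edge of the
product. Hence the walk lengths from `x` to `y` in the product are exactly the common walk lengths
in the factors, and the distance is the least of them.
-/

namespace SimpleGraph

theorem Walk.exists_adj_walk_of_length_eq_succ {V : Type*} {G : SimpleGraph V} {u v : V} {m : ℕ}
    (w : G.Walk u v) (hw : w.length = m + 1) :
    ∃ z, G.Adj u z ∧ ∃ q : G.Walk z v, q.length = m := by
  cases w with
  | nil => simp at hw
  | cons h q => exact ⟨_, h, q, by simpa using hw⟩

end SimpleGraph

namespace directProd

variable {ι : Type*} {V : ι → Type*} {G : ∀ i, SimpleGraph (V i)}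

def proj (i : ι) : directProd G →g G i where
  toFun x := x i
  map_rel' h := h.1 i

theorem exists_walk_length_eq {x y : ∀ i, V i} (W : (directProd G).Walk x y) (i : ι) :
    ∃ w : (G i).Walk (x i) (y i), w.length = W.length :=
  ⟨W.map (proj i), Walk.length_map _ _⟩

theorem exists_walk_of_forall_walk [Nonempty ι] {m : ℕ} {x y : ∀ i, V i}
    (h : ∀ i, ∃ w : (G i).Walk (x i) (y i), w.length = m) :
    ∃ W : (directProd G).Walk x y, W.length = m := by
  induction m generalizing x with
  | zero =>
    obtain rfl : x = y := funext fun i => (h i).elim fun w hw => w.eq_of_length_eq_zero hw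
    exact ⟨.nil, rfl⟩
  | succ m ih =>
    choose z hadj q hq using fun i => (h i).elim fun w hw => w.exists_adj_walk_of_length_eq_succ hw
    obtain ⟨W, hW⟩ := ih fun i => ⟨q i, hq i⟩
    have hxz : x ≠ z := fun hxz => (hadj (Classical.arbitrary ι)).ne (congrFun hxz _)
    exact ⟨.cons (show (directProd G).Adj x z from ⟨hadj, hxz⟩) W, by simp [hW]⟩

theorem range_walk_length [Nonempty ι] (x y : ∀ i, V i) :
    Set.range (Walk.length : (directProd G).Walk x y → ℕ) =
      {m | ∀ i, ∃ w : (G i).Walk (x i) (y i), w.length = m} := by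
  ext m
  constructor
  · rintro ⟨W, rfl⟩
    exact exists_walk_length_eq W
  · exact exists_walk_of_forall_walk

end directProd

theorem statement_19 (n : ℕ) (hn : 1 ≤ n) (V : Fin n → Type*)
    (G : ∀ i, SimpleGraph (V i)) (x y : ∀ i, V i) :
    ((¬ ∃ m : ℕ, ∀ i, ∃ w : (G i).Walk (x i) (y i), w.length = m) →
        ¬ (directProd G).Reachable x y) ∧
    ((∃ m : ℕ, ∀ i, ∃ w : (G i).Walk (x i) (y i), w.length = m) →
        (directProd G).dist x y =
          sInf {m : ℕ | ∀ i, ∃ w : (G i).Walk (x i) (y i), w.length = m}) := by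
  have : Nonempty (Fin n) := ⟨⟨0, hn⟩⟩
  constructor
  · rintro hlen ⟨W⟩
    exact hlen ⟨W.length, directProd.exists_walk_length_eq W⟩
  · intro _
    rw [dist_eq_sInf, directProd.range_walk_length]
end
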